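/- Let n ≥ 1 and let k_1,…,k_n be positive integers. Then in ℋ¹ one has z_{k_1} * z_{k_2} * ⋯ * z_{k_n} = ∑_{Π} (ш_{A ∈ Π} z_{∑_{i∈A} k_i}), where the sum runs over all partitions Π of the set {1,…,n} and the inner product is the shuffle product taken over the blocks A of Π of the single letters z_{∑_{i∈A} k_i}. -/

import Mathlib

open scoped BigOperators

/-- The product of `ℤ/pℤ` over all primes `p`. -/
abbrev PreA : Type := ∀ p : Nat.Primes, ZMod p

/-- The ideal of families that vanish for all but finitely many primes. -/
def nullIdeal : Ideal PreA where
  carrier := {f | {p | f p ≠ 0}.Finite}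
  zero_mem' := by simp
  add_mem' := by
    intro f g hf hg
    refine (hf.union hg).subset fun p hp => ?_
    by_contra hc
    simp only [Set.mem_union, Set.mem_setOf_eq, not_or, not_not] at hc
    exact hp (by simp [Set.mem_setOf_eq, hc.1, hc.2])
  smul_mem' := by
    intro c f hf
    refine hf.subset fun p hp => ?_
    simp only [Set.mem_setOf_eq] at hp ⊢
    intro h0
    exact hp (by simp [h0])

/-- The ring `𝒜 = (∏_p ℤ/pℤ)/(⊕_p ℤ/pℤ)`. -/
abbrev A : Type := PreA ⧸ nullIdeal

/-- `zetaSum p ks b` is `∑_{b > m₁ > ⋯ > m_n ≥ 1} ∏ mᵢ^{-kᵢ}` in `ℤ/pℤ`. -/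
def zetaSum (p : ℕ) : List ℕ → ℕ → ZMod p
  | [], _ => 1
  | k :: ks, b => ∑ m ∈ Finset.Ico 1 b, ((m : ZMod p)⁻¹) ^ k * zetaSum p ks m

/-- `zetaStarSum p ks b` is `∑_{b > m₁ ≥ ⋯ ≥ m_n ≥ 1} ∏ mᵢ^{-kᵢ}` in `ℤ/pℤ`. -/
def zetaStarSum (p : ℕ) : List ℕ → ℕ → ZMod p
  | [], _ => 1
  | k :: ks, b => ∑ m ∈ Finset.Ico 1 b, ((m : ZMod p)⁻¹) ^ k * zetaStarSum p ks (m + 1)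

/-- The finite multiple zeta value `ζ_𝒜(k₁,…,k_n)`. -/
def zetaA (ks : List ℕ) : A :=
  Ideal.Quotient.mk nullIdeal (fun p => zetaSum p ks p)

/-- The finite multiple zeta-star value `ζ⋆_𝒜(k₁,…,k_n)`. -/
def zetaStarA (ks : List ℕ) : A :=
  Ideal.Quotient.mk nullIdeal (fun p => zetaStarSum p ks p)

/-- `ℋ¹ = ℚ⟨z₁,z₂,…⟩`, the noncommutative polynomial algebra on variables `z_k`, `k ≥ 1`. -/
abbrev H1 : Type := MonoidAlgebra ℚ (FreeMonoid ℕ+)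

/-- The monomial (word) `z_{k₁} ⋯ z_{k_n}` in `ℋ¹`. -/
noncomputable def word (w : List ℕ+) : H1 :=
  MonoidAlgebra.of ℚ (FreeMonoid ℕ+) (FreeMonoid.ofList w)

/-- Shuffle product on words (with values in `ℋ¹`). -/
noncomputable def shuffleW : List ℕ+ → List ℕ+ → H1
  | [], w => word w
  | v, [] => word v
  | k :: v, l :: w => word [k] * shuffleW v (l :: w) + word [l] * shuffleW (k :: v) w
  termination_by v w => v.length + w.length
  decreasing_by all_goals first | (simp; omega) | simp | omega

/-- The shuffle product `ш` on `ℋ¹`, as the bilinear extension of `shuffleW`. -/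
noncomputable def shuffle (x y : H1) : H1 :=
  Finsupp.sum x.coeff fun v c => Finsupp.sum y.coeff fun w c' =>
    (c * c') • shuffleW (FreeMonoid.toList v) (FreeMonoid.toList w)

/-- Harmonic product on words (with values in `ℋ¹`). -/
noncomputable def harmW : List ℕ+ → List ℕ+ → H1
  | [], w => word w
  | v, [] => word v
  | k :: v, l :: w =>
      word [k] * harmW v (l :: w) + word [l] * harmW (k :: v) w
        + word [k + l] * harmW v w
  termination_by v w => v.length + w.length
  decreasing_by all_goals first | (simp; omega) | simp | omega

/-- The harmonic product `*` on `ℋ¹`, as the bilinear extension of `harmW`. -/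
noncomputable def harm (x y : H1) : H1 :=
  Finsupp.sum x.coeff fun v c => Finsupp.sum y.coeff fun w c' =>
    (c * c') • harmW (FreeMonoid.toList v) (FreeMonoid.toList w)

/-- Star-harmonic product on words (with values in `ℋ¹`). -/
noncomputable def harmStarW : List ℕ+ → List ℕ+ → H1
  | [], w => word w
  | v, [] => word v
  | k :: v, l :: w =>
      word [k] * harmStarW v (l :: w) + word [l] * harmStarW (k :: v) w
        - word [k + l] * harmStarW v w
  termination_by v w => v.length + w.length
  decreasing_by all_goals first | (simp; omega) | simp | omega

/-- The product `∗̄` on `ℋ¹`, as the bilinear extension of `harmStarW`. -/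
noncomputable def harmStar (x y : H1) : H1 :=
  Finsupp.sum x.coeff fun v c => Finsupp.sum y.coeff fun w c' =>
    (c * c') • harmStarW (FreeMonoid.toList v) (FreeMonoid.toList w)

/-- The image of a rational number in `𝒜`. -/
def ratA (q : ℚ) : A :=
  Ideal.Quotient.mk nullIdeal (fun p => (q.num : ZMod p) * ((q.den : ZMod p))⁻¹)

/-- The `ℚ`-linear map `Z_𝒜 : ℋ¹ → 𝒜` sending `z_{k₁} ⋯ z_{k_n}` to `ζ_𝒜(k₁,…,k_n)`. -/
noncomputable def ZA (x : H1) : A :=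
  Finsupp.sum x.coeff fun w c => ratA c * zetaA ((FreeMonoid.toList w).map (fun k => (k : ℕ)))

/-- The `ℚ`-linear map `Z̄_𝒜 : ℋ¹ → 𝒜` sending `z_{k₁} ⋯ z_{k_n}` to `ζ⋆_𝒜(k₁,…,k_n)`. -/
noncomputable def ZSA (x : H1) : A :=
  Finsupp.sum x.coeff fun w c => ratA c * zetaStarA ((FreeMonoid.toList w).map (fun k => (k : ℕ)))

/-- Sum of a list of positive integers (equal to the actual sum for nonempty lists). -/
def psum : List ℕ+ → ℕ+
  | [] => 1
  | k :: t => t.foldl (· + ·) k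

/-- The map `d` on words: `d(z_{k₁}⋯z_{k_n}) = ∑_{m} ∑_{0=i₀<⋯<i_m=n}
`z_{k_{i₀+1}+⋯+k_{i₁}} ⋯ z_{k_{i_{m-1}+1}+⋯+k_{i_m}}`. -/
noncomputable def dW (w : List ℕ+) : H1 :=
  ∑ c : Composition w.length, word ((w.splitWrtComposition c).map psum)

/-- `z_a` for a tuple `a = (a₁,…,a_m; b₁,…,b_m; c₁,…,c_n) ∈ I_{m,n}`:
`∑_{σ,τ ∈ S_m} z_{a_{σ(1)}} z_{b_{τ(1)}} ⋯ z_{a_{σ(m)}} z_{b_{τ(m)}} ш z_{c₁} ш ⋯ ш z_{c_n}`. -/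
noncomputable def zTuple {m n : ℕ} (a b : Fin m → ℕ+) (c : Fin n → ℕ+) : H1 :=
  ∑ σ : Equiv.Perm (Fin m), ∑ τ : Equiv.Perm (Fin m),
    (List.ofFn c).foldl (fun w k => shuffle w (word [k]))
      (word ((List.ofFn (fun i => [a (σ i), b (τ i)])).flatten))

/-- The statement `P_{m,n}`: `Z_𝒜(z_a) = Z̄_𝒜(z_a) = 0` for all `a ∈ I_{m,n}`. -/
def Pmn (m n : ℕ) : Prop :=
  ∀ (a b : Fin m → ℕ+) (c : Fin n → ℕ+),
    (∀ i, Odd (a i : ℕ)) → (∀ i, Odd (b i : ℕ)) → (∀ j, Even (c j : ℕ)) →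
    ZA (zTuple a b c) = 0 ∧ ZSA (zTuple a b c) = 0

/-- The list `{c}^{n₀}, a, {c}^{n₁}, b, {c}^{n₂}, …, a, {c}^{n_{2m-1}}, b, {c}^{n_{2m}}`. -/
def bbList (a b c : ℕ) (m : ℕ) (f : Fin (2 * m + 1) → ℕ) : List ℕ :=
  (List.ofFn (fun j : Fin m =>
      List.replicate (f ⟨2 * j.val, by have := j.isLt; omega⟩) c ++ [a]
        ++ List.replicate (f ⟨2 * j.val + 1, by have := j.isLt; omega⟩) c ++ [b])).flatten
    ++ List.replicate (f ⟨2 * m, by omega⟩) c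

open scoped Classical

/-!
Right multiplication by a letter splits as `x * z_a = x ш z_a + D_a x`, where `D_a` raises one
letter of each word by `a`. The operators `ш z_b` commute, and `D_a` is a derivation for them:
`D_a (x ш z_b) = x ш z_{b+a} + D_a x ш z_b`. Hence `D_a` applied to a shuffle of letters raises
one of the letters. Inductively, `z_{k_{n+1}}` either forms a new block or is added to one of the
blocks of a partition of `{1,…,n}`, which is the recursion generating all set partitions.
-/

lemma word_append (u v : List ℕ+) : word (u ++ v) = word u * word v := by
  simp only [word, ← map_mul]
  rfl

lemma word_nil : word [] = 1 :=
  map_one _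

lemma word_cons (a : ℕ+) (u : List ℕ+) : word (a :: u) = word [a] * word u :=
  word_append [a] u

noncomputable def wordLinear (f : List ℕ+ → H1) : H1 →ₗ[ℚ] H1 :=
  (MonoidAlgebra.basis (FreeMonoid ℕ+) ℚ).constr ℚ (f ∘ FreeMonoid.toList)

@[simp]
lemma wordLinear_word (f : List ℕ+ → H1) (u : List ℕ+) : wordLinear f (word u) = f u := by
  rw [wordLinear, ← FreeMonoid.toList_ofList u]
  exact (MonoidAlgebra.basis (FreeMonoid ℕ+) ℚ).constr_basis ℚ _ _

lemma linearMap_ext_word {f g : H1 →ₗ[ℚ] H1} (h : ∀ u, f (word u) = g (word u)) : f = g :=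
  (MonoidAlgebra.basis (FreeMonoid ℕ+) ℚ).ext fun u => h u.toList

lemma sum_coeff_word_right (F : List ℕ+ → List ℕ+ → H1) (x : H1) (w : List ℕ+) :
    (Finsupp.sum x.coeff fun v c => Finsupp.sum (word w).coeff fun w' c' =>
      (c * c') • F (FreeMonoid.toList v) (FreeMonoid.toList w')) = wordLinear (F · w) x := by
  simp only [word, MonoidAlgebra.of_apply, MonoidAlgebra.coeff_single, mul_zero,
    FreeMonoid.toList_ofList, zero_smul, Finsupp.sum_single_index, mul_one, wordLinear,
    Module.Basis.constr_apply, Function.comp_apply]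
  rfl

/-- `raiseW a u` is the sum of the words obtained from `u` by replacing one letter `z_c` by
`z_{c+a}`. -/
noncomputable def raiseW (a : ℕ+) : List ℕ+ → H1
  | [] => 0
  | c :: u => word ((c + a) :: u) + word [c] * raiseW a u

lemma shuffleW_nil_right (v : List ℕ+) : shuffleW v [] = word v := by
  cases v <;> simp [shuffleW]

lemma harmW_nil_right (v : List ℕ+) : harmW v [] = word v := by
  cases v <;> simp [harmW]

lemma harmW_singleton_right (a : ℕ+) :
    ∀ u : List ℕ+, harmW u [a] = shuffleW u [a] + raiseW a u
  | [] => by simp [harmW, shuffleW, raiseW]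
  | c :: u => by
    simp only [harmW, shuffleW, raiseW, harmW_singleton_right a u, harmW_nil_right,
      shuffleW_nil_right, ← word_cons]
    noncomm_ring

noncomputable def shuffleLetter (a : ℕ+) : H1 →ₗ[ℚ] H1 := wordLinear (shuffleW · [a])

noncomputable def raiseLetter (a : ℕ+) : H1 →ₗ[ℚ] H1 := wordLinear (raiseW a)

lemma shuffle_word_singleton (x : H1) (a : ℕ+) : shuffle x (word [a]) = shuffleLetter a x :=
  sum_coeff_word_right _ x [a]

lemma harm_word_singleton (x : H1) (a : ℕ+) :
    harm x (word [a]) = shuffleLetter a x + raiseLetter a x := by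
  rw [harm, sum_coeff_word_right, ← LinearMap.add_apply]
  congr 1
  exact linearMap_ext_word fun u => by simp [shuffleLetter, raiseLetter, harmW_singleton_right]

lemma shuffleLetter_nil (a : ℕ+) : shuffleLetter a (word []) = word [a] := by
  simp [shuffleLetter, shuffleW]

lemma raiseLetter_nil (a : ℕ+) : raiseLetter a (word []) = 0 := by
  simp [raiseLetter, raiseW]

lemma shuffleLetter_word_mul (a c : ℕ+) (x : H1) :
    shuffleLetter a (word [c] * x) =
      word [c] * shuffleLetter a x + word [a] * (word [c] * x) := by
  have : shuffleLetter a ∘ₗ LinearMap.mulLeft ℚ (word [c]) =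
      LinearMap.mulLeft ℚ (word [c]) ∘ₗ shuffleLetter a +
        LinearMap.mulLeft ℚ (word [a, c]) :=
    linearMap_ext_word fun u => by
      simp [shuffleLetter, ← word_append, shuffleW, shuffleW_nil_right]
  simpa [word_cons a [c], mul_assoc] using LinearMap.congr_fun this x

lemma raiseLetter_word_mul (a c : ℕ+) (x : H1) :
    raiseLetter a (word [c] * x) = word [c + a] * x + word [c] * raiseLetter a x := by
  have : raiseLetter a ∘ₗ LinearMap.mulLeft ℚ (word [c]) =
      LinearMap.mulLeft ℚ (word [c + a]) +
        LinearMap.mulLeft ℚ (word [c]) ∘ₗ raiseLetter a :=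
    linearMap_ext_word fun u => by simp [raiseLetter, ← word_cons, raiseW]
  simpa using LinearMap.congr_fun this x

lemma raiseLetter_shuffleLetter (a b : ℕ+) (x : H1) :
    raiseLetter a (shuffleLetter b x) =
      shuffleLetter (b + a) x + shuffleLetter b (raiseLetter a x) := by
  have : raiseLetter a ∘ₗ shuffleLetter b =
      shuffleLetter (b + a) + shuffleLetter b ∘ₗ raiseLetter a := by
    refine linearMap_ext_word fun u => ?_
    simp only [LinearMap.comp_apply, LinearMap.add_apply]
    induction u with
    | nil =>
      rw [shuffleLetter_nil, shuffleLetter_nil, raiseLetter_nil, map_zero, add_zero, word_cons,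
        raiseLetter_word_mul, raiseLetter_nil, mul_zero, add_zero, word_nil, mul_one]
    | cons c u ih =>
      simp only [word_cons c u, shuffleLetter_word_mul, raiseLetter_word_mul, map_add, ih]
      noncomm_ring
  simpa using LinearMap.congr_fun this x

lemma shuffleLetter_comm (a b : ℕ+) (x : H1) :
    shuffleLetter a (shuffleLetter b x) = shuffleLetter b (shuffleLetter a x) := by
  have : shuffleLetter a ∘ₗ shuffleLetter b = shuffleLetter b ∘ₗ shuffleLetter a := by
    refine linearMap_ext_word fun u => ?_
    simp only [LinearMap.comp_apply]
    induction u with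
    | nil =>
      simp only [shuffleLetter, wordLinear_word, shuffleW, shuffleW_nil_right]
      abel
    | cons c u ih =>
      simp only [word_cons c u, shuffleLetter_word_mul, map_add, ih]
      noncomm_ring
  simpa using LinearMap.congr_fun this x

instance : LeftCommutative fun a : ℕ+ => ⇑(shuffleLetter a) :=
  ⟨shuffleLetter_comm⟩

noncomputable def shuffleLetters (m : Multiset ℕ+) : H1 :=
  m.foldr (fun a => ⇑(shuffleLetter a)) (word [])

@[simp]
lemma shuffleLetters_zero : shuffleLetters 0 = word [] :=
  rfl

@[simp]
lemma shuffleLetters_cons (a : ℕ+) (m : Multiset ℕ+) :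
    shuffleLetters (a ::ₘ m) = shuffleLetter a (shuffleLetters m) :=
  Multiset.foldr_cons _ _ _ _

lemma list_foldl_shuffle_eq_shuffleLetters (l : List ℕ+) :
    l.foldl (fun w s => shuffle w (word [s])) (word []) = shuffleLetters l := by
  simp only [shuffle_word_singleton]
  rw [shuffleLetters, Multiset.foldr_swap, Multiset.coe_foldl]

lemma raiseLetter_shuffleLetters (a : ℕ+) (m : Multiset ℕ+) :
    raiseLetter a (shuffleLetters m) =
      (m.map fun x => shuffleLetters ((x + a) ::ₘ m.erase x)).sum := by
  induction m using Multiset.induction_on with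
  | empty => simp [raiseLetter_nil]
  | cons b m ih =>
    have hcons : ∀ x ∈ m, shuffleLetters ((x + a) ::ₘ (b ::ₘ m).erase x) =
        shuffleLetter b (shuffleLetters ((x + a) ::ₘ m.erase x)) := fun x hx => by
      rw [Multiset.erase_cons_tail_of_mem hx, Multiset.cons_swap, shuffleLetters_cons]
    rw [shuffleLetters_cons, raiseLetter_shuffleLetter, ih, Multiset.map_cons,
      Multiset.sum_cons, Multiset.erase_cons_head, Multiset.map_congr rfl hcons,
      shuffleLetters_cons, map_multiset_sum, Multiset.map_map]
    rfl

lemma harm_shuffleLetters_word_singleton (m : Multiset ℕ+) (a : ℕ+) :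
    harm (shuffleLetters m) (word [a]) =
      shuffleLetters (a ::ₘ m) +
        (m.map fun x => shuffleLetters ((x + a) ::ₘ m.erase x)).sum := by
  rw [harm_word_singleton, raiseLetter_shuffleLetters, shuffleLetters_cons]

def blockLetter {ι : Type*} (k : ι → ℕ+) (A : Finset ι) : ℕ+ :=
  (∑ i ∈ A, (k i : ℕ)).toPNat'

lemma Nat.toPNat'_add_of_pos {m : ℕ} (hm : 0 < m) (a : ℕ+) : (m + a).toPNat' = m.toPNat' + a :=
  PNat.eq <| by simp [hm]

lemma harm_shuffleLetters_blocks {ι : Type*} [DecidableEq ι] (Q : Finset (Finset ι))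
    (hQ : ∀ P ∈ Q, P.Nonempty) (k : ι → ℕ+) (a : ℕ+) :
    harm (shuffleLetters (Q.val.map (blockLetter k))) (word [a]) =
      ∑ B ∈ insert ∅ Q, shuffleLetters
        (((∑ i ∈ B, (k i : ℕ)) + a).toPNat' ::ₘ (Q.erase B).val.map (blockLetter k)) := by
  have hempty : ∅ ∉ Q := fun h => Finset.not_nonempty_empty (hQ ∅ h)
  rw [harm_shuffleLetters_word_singleton, Finset.sum_insert hempty, Finset.sum_empty, zero_add,
    PNat.coe_toPNat', Finset.erase_eq_of_notMem hempty, Finset.sum_eq_multiset_sum,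
    Multiset.map_map]
  congr 2
  refine Multiset.map_congr rfl fun B hB => ?_
  have hpos : 0 < ∑ i ∈ B, (k i : ℕ) := Finset.sum_pos (fun i _ => (k i).pos) (hQ B hB)
  rw [Function.comp_apply, Nat.toPNat'_add_of_pos hpos, Finset.erase_val,
    Multiset.map_erase_of_mem _ _ hB]
  rfl

section FinPartitions

variable {n : ℕ}

noncomputable def finPartitions (n : ℕ) : Finset (Finset (Finset (Fin n))) :=
  Finset.univ.filter fun Q => (∀ P ∈ Q, P.Nonempty) ∧ ∀ x, ∃! P, P ∈ Q ∧ x ∈ P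

lemma mem_finPartitions {Q : Finset (Finset (Fin n))} :
    Q ∈ finPartitions n ↔ (∀ P ∈ Q, P.Nonempty) ∧ ∀ x, ∃! P, P ∈ Q ∧ x ∈ P := by
  simp [finPartitions]

lemma finset_ext_fin_succ {P P' : Finset (Fin (n + 1))}
    (hlast : Fin.last n ∈ P ↔ Fin.last n ∈ P')
    (hcast : ∀ i : Fin n, i.castSucc ∈ P ↔ i.castSucc ∈ P') : P = P' := by
  ext x
  induction x using Fin.lastCases with
  | last => exact hlast
  | cast i => exact hcast i

def liftBlock : Finset (Fin n) ↪ Finset (Fin (n + 1)) :=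
  (Finset.mapEmbedding Fin.castSuccEmb).toEmbedding

noncomputable def restrictBlock (P : Finset (Fin (n + 1))) : Finset (Fin n) :=
  P.preimage Fin.castSucc (Fin.castSucc_injective n).injOn

def insertLast (B : Finset (Fin n)) : Finset (Fin (n + 1)) :=
  insert (Fin.last n) (liftBlock B)

@[simp]
lemma castSucc_mem_liftBlock {B : Finset (Fin n)} {i : Fin n} :
    i.castSucc ∈ liftBlock B ↔ i ∈ B := by
  simp [liftBlock]

@[simp]
lemma last_notMem_liftBlock (B : Finset (Fin n)) : Fin.last n ∉ liftBlock B := by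
  simp [liftBlock, Fin.castSucc_ne_last]

@[simp]
lemma mem_restrictBlock {P : Finset (Fin (n + 1))} {i : Fin n} :
    i ∈ restrictBlock P ↔ i.castSucc ∈ P :=
  Finset.mem_preimage

@[simp]
lemma castSucc_mem_insertLast {B : Finset (Fin n)} {i : Fin n} :
    i.castSucc ∈ insertLast B ↔ i ∈ B := by
  simp [insertLast, Fin.castSucc_ne_last]

@[simp]
lemma last_mem_insertLast (B : Finset (Fin n)) : Fin.last n ∈ insertLast B :=
  Finset.mem_insert_self _ _

@[simp]
lemma restrictBlock_liftBlock (B : Finset (Fin n)) : restrictBlock (liftBlock B) = B := by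
  ext; simp

@[simp]
lemma restrictBlock_insertLast (B : Finset (Fin n)) : restrictBlock (insertLast B) = B := by
  ext; simp

lemma liftBlock_restrictBlock {P : Finset (Fin (n + 1))} (h : Fin.last n ∉ P) :
    liftBlock (restrictBlock P) = P :=
  finset_ext_fin_succ (by simp [h]) (by simp)

lemma insertLast_restrictBlock {P : Finset (Fin (n + 1))} (h : Fin.last n ∈ P) :
    insertLast (restrictBlock P) = P :=
  finset_ext_fin_succ (by simp [h]) (by simp)

lemma sum_liftBlock (f : Fin (n + 1) → ℕ) (B : Finset (Fin n)) :
    ∑ i ∈ liftBlock B, f i = ∑ i ∈ B, f i.castSucc :=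
  Finset.sum_map B Fin.castSuccEmb f

noncomputable def extendPartition (Q : Finset (Finset (Fin n))) (B : Finset (Fin n)) :
    Finset (Finset (Fin (n + 1))) :=
  insert (insertLast B) ((Q.erase B).map liftBlock)

noncomputable def restrictPartition (Q : Finset (Finset (Fin (n + 1)))) : Finset (Finset (Fin n)) :=
  (Q.image restrictBlock).erase ∅

noncomputable def restrictLastBlock (Q : Finset (Finset (Fin (n + 1)))) : Finset (Fin n) :=
  Finset.univ.filter fun i => ∃ P ∈ Q, Fin.last n ∈ P ∧ i.castSucc ∈ P

lemma extendPartition_mem {Q : Finset (Finset (Fin n))} (hQ : Q ∈ finPartitions n)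
    {B : Finset (Fin n)} (hB : B ∈ insert ∅ Q) :
    extendPartition Q B ∈ finPartitions (n + 1) := by
  obtain ⟨hne, huniq⟩ := mem_finPartitions.mp hQ
  refine mem_finPartitions.mpr ⟨?_, fun x => ?_⟩
  · simp only [extendPartition, Finset.mem_insert, Finset.mem_map, Finset.mem_erase]
    rintro P (rfl | ⟨A, ⟨-, hA⟩, rfl⟩)
    · exact ⟨_, last_mem_insertLast B⟩
    · exact (hne A hA).map
  induction x using Fin.lastCases with
  | last =>
    refine ⟨insertLast B, ⟨Finset.mem_insert_self _ _, last_mem_insertLast B⟩, ?_⟩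
    simp only [extendPartition, Finset.mem_insert, Finset.mem_map]
    rintro P ⟨rfl | ⟨A, -, rfl⟩, hP⟩
    · rfl
    · exact absurd hP (last_notMem_liftBlock A)
  | cast i =>
    simp only [extendPartition, Finset.mem_insert, Finset.mem_map, Finset.mem_erase]
    by_cases hiB : i ∈ B
    · have hBQ : B ∈ Q := (Finset.mem_insert.mp hB).resolve_left (Finset.ne_empty_of_mem hiB)
      refine ⟨insertLast B, ⟨Or.inl rfl, castSucc_mem_insertLast.mpr hiB⟩, ?_⟩
      rintro P ⟨rfl | ⟨A, ⟨hAB, hA⟩, rfl⟩, hiA⟩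
      · rfl
      · exact absurd ((huniq i).unique ⟨hA, castSucc_mem_liftBlock.mp hiA⟩ ⟨hBQ, hiB⟩) hAB
    · obtain ⟨A, ⟨hA, hiA⟩, hAuniq⟩ := huniq i
      have hAB : A ≠ B := fun h => hiB (h ▸ hiA)
      refine ⟨liftBlock A,
        ⟨Or.inr ⟨A, ⟨hAB, hA⟩, rfl⟩, castSucc_mem_liftBlock.mpr hiA⟩, ?_⟩
      rintro P ⟨rfl | ⟨A', ⟨-, hA'⟩, rfl⟩, hiP⟩
      · exact absurd (castSucc_mem_insertLast.mp hiP) hiB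
      · rw [hAuniq A' ⟨hA', castSucc_mem_liftBlock.mp hiP⟩]

lemma restrictPartition_mem {Q : Finset (Finset (Fin (n + 1)))} (hQ : Q ∈ finPartitions (n + 1)) :
    restrictPartition Q ∈ finPartitions n := by
  obtain ⟨-, huniq⟩ := mem_finPartitions.mp hQ
  refine mem_finPartitions.mpr ⟨fun A hA => Finset.nonempty_iff_ne_empty.mpr
    (Finset.ne_of_mem_erase hA), fun i => ?_⟩
  obtain ⟨P, ⟨hP, hiP⟩, hPuniq⟩ := huniq i.castSucc
  have hiP' : i ∈ restrictBlock P := mem_restrictBlock.mpr hiP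
  refine ⟨restrictBlock P, ⟨Finset.mem_erase.mpr ⟨Finset.ne_empty_of_mem hiP',
    Finset.mem_image_of_mem _ hP⟩, hiP'⟩, ?_⟩
  rintro A ⟨hA, hiA⟩
  obtain ⟨P', hP', rfl⟩ := Finset.mem_image.mp (Finset.mem_of_mem_erase hA)
  rw [hPuniq P' ⟨hP', mem_restrictBlock.mp hiA⟩]

lemma restrictLastBlock_eq {Q : Finset (Finset (Fin (n + 1)))} (hQ : Q ∈ finPartitions (n + 1))
    {P : Finset (Fin (n + 1))} (hP : P ∈ Q) (hlast : Fin.last n ∈ P) :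
    restrictLastBlock Q = restrictBlock P := by
  ext i
  simp only [restrictLastBlock, Finset.mem_filter, Finset.mem_univ, true_and, mem_restrictBlock]
  constructor
  · rintro ⟨P', hP', hlast', hi⟩
    rwa [((mem_finPartitions.mp hQ).2 (Fin.last n)).unique ⟨hP', hlast'⟩ ⟨hP, hlast⟩] at hi
  · exact fun hi => ⟨P, hP, hlast, hi⟩

lemma restrictLastBlock_mem {Q : Finset (Finset (Fin (n + 1)))} (hQ : Q ∈ finPartitions (n + 1)) :
    restrictLastBlock Q ∈ insert ∅ (restrictPartition Q) := by
  obtain ⟨P, ⟨hP, hlast⟩, -⟩ := (mem_finPartitions.mp hQ).2 (Fin.last n)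
  rw [restrictLastBlock_eq hQ hP hlast, Finset.mem_insert, restrictPartition, Finset.mem_erase]
  by_cases h : restrictBlock P = ∅
  · exact Or.inl h
  · exact Or.inr ⟨h, Finset.mem_image_of_mem _ hP⟩

lemma restrictPartition_extendPartition {Q : Finset (Finset (Fin n))} (hQ : Q ∈ finPartitions n)
    {B : Finset (Fin n)} (hB : B ∈ insert ∅ Q) :
    restrictPartition (extendPartition Q B) = Q := by
  have hempty : ∅ ∉ Q := fun h => Finset.not_nonempty_empty ((mem_finPartitions.mp hQ).1 ∅ h)
  have himage : ((Q.erase B).map liftBlock).image restrictBlock = Q.erase B := by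
    simp [Finset.map_eq_image, Finset.image_image, Function.comp_def]
  rw [restrictPartition, extendPartition, Finset.image_insert, restrictBlock_insertLast, himage]
  rcases Finset.mem_insert.mp hB with rfl | hBQ
  · rw [Finset.erase_insert (Finset.notMem_erase _ _), Finset.erase_eq_of_notMem hempty]
  · rw [Finset.insert_erase hBQ, Finset.erase_eq_of_notMem hempty]

lemma restrictLastBlock_extendPartition (Q : Finset (Finset (Fin n))) (B : Finset (Fin n)) :
    restrictLastBlock (extendPartition Q B) = B := by
  ext i
  simp [restrictLastBlock, extendPartition]

lemma extendPartition_restrictPartition {Q : Finset (Finset (Fin (n + 1)))}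
    (hQ : Q ∈ finPartitions (n + 1)) :
    extendPartition (restrictPartition Q) (restrictLastBlock Q) = Q := by
  obtain ⟨hne, huniq⟩ := mem_finPartitions.mp hQ
  obtain ⟨P, ⟨hP, hlast⟩, hPuniq⟩ := huniq (Fin.last n)
  have hrest : ((restrictPartition Q).erase (restrictBlock P)).map liftBlock = Q.erase P := by
    ext A
    simp only [restrictPartition, Finset.mem_map, Finset.mem_erase, Finset.mem_image]
    constructor
    · rintro ⟨_, ⟨hAP, -, A, hA, rfl⟩, rfl⟩
      have hAP : A ≠ P := fun h => hAP (h ▸ rfl)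
      have hAlast : Fin.last n ∉ A := fun h => hAP (hPuniq A ⟨hA, h⟩)
      exact ⟨by rwa [liftBlock_restrictBlock hAlast], by rwa [liftBlock_restrictBlock hAlast]⟩
    · rintro ⟨hAP, hA⟩
      have hAlast : Fin.last n ∉ A := fun h => hAP (hPuniq A ⟨hA, h⟩)
      obtain ⟨x, hx⟩ := hne A hA
      obtain ⟨i, rfl⟩ := Fin.exists_castSucc_eq.mpr fun h => hAlast (h ▸ hx)
      refine ⟨restrictBlock A, ⟨fun h => hAP ?_,
        Finset.ne_empty_of_mem (mem_restrictBlock.mpr hx), A, hA, rfl⟩,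
        liftBlock_restrictBlock hAlast⟩
      have hiP : i.castSucc ∈ P := mem_restrictBlock.mp (h ▸ mem_restrictBlock.mpr hx)
      exact (huniq i.castSucc).unique ⟨hA, hx⟩ ⟨hP, hiP⟩
  rw [restrictLastBlock_eq hQ hP hlast, extendPartition, hrest, insertLast_restrictBlock hlast,
    Finset.insert_erase hP]

/-- `B = ∅` stands for `Fin.last n` forming a block on its own. -/
lemma sum_finPartitions_succ {M : Type*} [AddCommMonoid M]
    (f : Finset (Finset (Fin (n + 1))) → M) :
    ∑ Q ∈ finPartitions (n + 1), f Q =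
      ∑ Q ∈ finPartitions n, ∑ B ∈ insert ∅ Q, f (extendPartition Q B) := by
  rw [Finset.sum_sigma']
  symm
  refine Finset.sum_bij' (fun p _ => extendPartition p.1 p.2)
    (fun Q _ => ⟨restrictPartition Q, restrictLastBlock Q⟩) ?_ ?_ ?_ ?_ fun _ _ => rfl
  · rintro ⟨Q, B⟩ h
    obtain ⟨hQ, hB⟩ := Finset.mem_sigma.mp h
    exact extendPartition_mem hQ hB
  · intro Q hQ
    exact Finset.mem_sigma.mpr ⟨restrictPartition_mem hQ, restrictLastBlock_mem hQ⟩
  · rintro ⟨Q, B⟩ h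
    obtain ⟨hQ, hB⟩ := Finset.mem_sigma.mp h
    rw [restrictPartition_extendPartition hQ hB, restrictLastBlock_extendPartition]
  · intro Q hQ
    exact extendPartition_restrictPartition hQ

lemma map_blockLetter_extendPartition (k : Fin (n + 1) → ℕ+)
    (Q : Finset (Finset (Fin n))) (B : Finset (Fin n)) :
    (extendPartition Q B).val.map (blockLetter k) =
      ((∑ i ∈ B, (k i.castSucc : ℕ)) + k (Fin.last n)).toPNat' ::ₘ
        (Q.erase B).val.map (blockLetter fun i => k i.castSucc) := by
  have hnotMem : insertLast B ∉ (Q.erase B).map liftBlock := fun h => by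
    obtain ⟨A, -, hA⟩ := Finset.mem_map.mp h
    exact last_notMem_liftBlock A (hA ▸ last_mem_insertLast B)
  rw [extendPartition, Finset.insert_val_of_notMem hnotMem, Finset.map_val, Multiset.map_cons,
    Multiset.map_map]
  congr 1
  · rw [blockLetter, insertLast, Finset.sum_insert (last_notMem_liftBlock B), sum_liftBlock,
      add_comm]
  · congr 1
    funext A
    rw [Function.comp_apply, blockLetter, blockLetter, sum_liftBlock]

end FinPartitions

lemma foldl_harm_eq_sum_finPartitions (n : ℕ) (k : Fin n → ℕ+) :
    (List.ofFn k).foldl (fun w s => harm w (word [s])) (word []) =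
      ∑ Q ∈ finPartitions n, shuffleLetters (Q.val.map (blockLetter k)) := by
  induction n with
  | zero =>
    have : finPartitions 0 = {∅} := by
      ext Q
      simp [mem_finPartitions, Finset.eq_empty_iff_forall_notMem, Finset.Nonempty]
    simp [this]
  | succ n ih =>
    rw [List.ofFn_succ', List.concat_eq_append, List.foldl_append, List.foldl_cons,
      List.foldl_nil, ih, harm_word_singleton, ← LinearMap.add_apply, map_sum,
      sum_finPartitions_succ]
    refine Finset.sum_congr rfl fun Q hQ => ?_
    rw [LinearMap.add_apply, ← harm_word_singleton,
      harm_shuffleLetters_blocks Q (mem_finPartitions.mp hQ).1]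
    simp_rw [map_blockLetter_extendPartition]

theorem harm_eq_sum_partitions_shuffle_general (n : ℕ) (k : Fin n → ℕ+) :
    (List.ofFn k).foldl (fun w s => harm w (word [s])) (word [])
    = ∑ Q ∈ (Finset.univ : Finset (Finset (Finset (Fin n)))).filter
        (fun Q => (∀ P ∈ Q, P.Nonempty) ∧ ∀ x, ∃! P, P ∈ Q ∧ x ∈ P),
        (Multiset.sort (Q.val.map (fun A => ∑ i ∈ A, (k i : ℕ))) (· ≤ ·)).foldl
          (fun w s => shuffle w (word [s.toPNat'])) (word []) := by
  rw [foldl_harm_eq_sum_finPartitions]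
  refine Finset.sum_congr rfl fun Q _ => ?_
  rw [← List.foldl_map (f := Nat.toPNat') (g := fun w s => shuffle w (word [s])),
    list_foldl_shuffle_eq_shuffleLetters, ← Multiset.map_coe, Multiset.sort_eq, Multiset.map_map]
  rfl

/-- `z_{k₁} * ⋯ * z_{k_n} = ∑_Π ш_{A ∈ Π} z_{∑_{i∈A} k_i}`, the sum running over all
partitions `Π` of `{1,…,n}` (modeled as families `Q` of pairwise disjoint nonempty
subsets of `Fin n` covering it); the shuffle over the blocks is taken over the block
sums listed in a canonical (sorted) order. -/
theorem harm_eq_sum_partitions_shuffle (n : ℕ) (hn : 1 ≤ n) (k : Fin n → ℕ+) :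
    (List.ofFn k).foldl (fun w s => harm w (word [s])) (word [])
    = ∑ Q ∈ (Finset.univ : Finset (Finset (Finset (Fin n)))).filter
        (fun Q => (∀ P ∈ Q, P.Nonempty) ∧ ∀ x, ∃! P, P ∈ Q ∧ x ∈ P),
        (Multiset.sort (Q.val.map (fun A => ∑ i ∈ A, (k i : ℕ))) (· ≤ ·)).foldl
          (fun w s => shuffle w (word [s.toPNat'])) (word []) :=
  harm_eq_sum_partitions_shuffle_general n k
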